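/- arXiv:1708.08326 — 5 statements merged into one kernel-verified Lean document; each statement's English description precedes it below -/
import Mathlib

section
/- Let X be a complete atomistic lattice (every element is the supremum of the atoms below it) with the covering property: for every x ∈ X and every atom a with a ⊓ x = ⊥, the element a ⊔ x covers x (that is, x < a ⊔ x and there is no z with x < z < a ⊔ x). Then X has the exchange property: for any atoms a, b and any element c ∈ X, if a ≤ c ⊔ b and a ≰ c, then b ≤ c ⊔ a. -/
/-- A complete atomistic lattice with the covering property has the exchange property. -/
theorem stmt_2 {X : Type*} [CompleteLattice X]
    (h_atomistic : ∀ x : X, x = sSup {a : X | IsAtom a ∧ a ≤ x})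
    (h_cov : ∀ (x a : X), IsAtom a → a ⊓ x = ⊥ → x ⋖ a ⊔ x) :
    ∀ (a b c : X), IsAtom a → IsAtom b → a ≤ c ⊔ b → ¬ a ≤ c → b ≤ c ⊔ a := by
  intro a b c ha hb hab hac
  have hbc : b ⊓ c = ⊥ := by
    rcases hb.le_iff.mp (inf_le_left : b ⊓ c ≤ b) with h | h
    · exact h
    · exfalso
      have hbc' : b ≤ c := h ▸ inf_le_right
      exact hac (hab.trans (sup_le le_rfl hbc'))
  have hcov := h_cov c b hb hbc
  have h1 : c < c ⊔ a := lt_of_le_of_ne le_sup_left (fun h => hac (h ▸ le_sup_right))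
  have h2 : c ⊔ a ≤ b ⊔ c := sup_le (le_sup_right) (hab.trans (by rw [sup_comm]))
  have : c ⊔ a = b ⊔ c := by
    rcases eq_or_lt_of_le h2 with h | h
    · exact h
    · exact absurd h (hcov.2 h1)
  calc b ≤ b ⊔ c := le_sup_left
    _ = c ⊔ a := this.symm
end

section
/- Let A be a unital C*-algebra over ℂ, let a ∈ A be self-adjoint (star a = a), and let α be a real number in the spectrum of a. Then there exists a state on A taking the value α at a: a linear functional φ : A → ℂ such that φ(star b * b) is a nonnegative real number for every b ∈ A, φ(1) = 1, and φ(a) = α. -/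
section Aux

variable {A : Type*} [CStarAlgebra A]


lemma aux_isStarNormal_add_smul_one {c : A} (hc : IsSelfAdjoint c) (z : ℂ) :
    IsStarNormal (c + z • 1) := by
  constructor
  have hmul : ∀ u v : ℂ, (c + u • (1 : A)) * (c + v • 1) = c * c + (u + v) • c + (u * v) • 1 := by
    intro u v
    simp only [mul_add, add_mul, smul_mul_assoc, mul_smul_comm, smul_smul, one_mul, mul_one,
      add_smul, smul_add]
    rw [mul_comm v u]
    abel
  have h₁ : star (c + z • (1 : A)) = c + (starRingEnd ℂ z) • 1 := by
    simp [star_smul, hc.star_eq]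
  rw [Commute, SemiconjBy, h₁, hmul, hmul, add_comm (starRingEnd ℂ z) z,
    mul_comm (starRingEnd ℂ z) z]

/-- key norm bound via spectral radius of a normal element -/
lemma aux_norm_add_le [NormOneClass A] (g : A →L[ℂ] ℂ) (hgn : ‖g‖ ≤ 1) (hg1 : g 1 = 1) {c : A}
    (hc : IsSelfAdjoint c) (z : ℂ) {R : ℝ} (hR : 0 ≤ R)
    (hb : ∀ u ∈ spectrum ℂ c, ‖u + z‖ ≤ R) : ‖g c + z‖ ≤ R := by
  set y := c + z • (1 : A) with hy
  haveI : IsStarNormal y := aux_isStarNormal_add_smul_one hc z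
  have hyspec : ∀ w ∈ spectrum ℂ y, ‖w‖ ≤ R := by
    intro w hw
    have hy' : y = algebraMap ℂ A z + c := by
      rw [hy, Algebra.algebraMap_eq_smul_one, add_comm]
    rw [hy', ← spectrum.singleton_add_eq] at hw
    obtain ⟨x, hx, u, hu, rfl⟩ := Set.mem_add.mp hw
    rw [Set.mem_singleton_iff] at hx
    subst hx
    rw [add_comm]
    exact hb u hu
  have hsr : spectralRadius ℂ y ≤ ENNReal.ofReal R := by
    rw [spectralRadius]
    refine iSup₂_le fun w hw => ?_
    rw [← enorm_eq_nnnorm, ← ofReal_norm]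
    exact ENNReal.ofReal_le_ofReal (hyspec w hw)
  have hny : ‖y‖ ≤ R := by
    rw [IsStarNormal.spectralRadius_eq_nnnorm y, ← enorm_eq_nnnorm, ← ofReal_norm] at hsr
    exact (ENNReal.ofReal_le_ofReal_iff hR).mp hsr
  have hgy : g y = g c + z := by
    rw [hy, map_add, map_smul, hg1, smul_eq_mul, mul_one]
  calc ‖g c + z‖ = ‖g y‖ := by rw [hgy]
    _ ≤ ‖g‖ * ‖y‖ := g.le_opNorm y
    _ ≤ 1 * R := by
        exact mul_le_mul hgn hny (norm_nonneg _) zero_le_one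
    _ = R := one_mul R

lemma aux_pos [NormOneClass A] (g : A →L[ℂ] ℂ) (hgn : ‖g‖ ≤ 1) (hg1 : g 1 = 1) (b : A) :
    ∃ r : ℝ, 0 ≤ r ∧ g (star b * b) = (r : ℂ) := by
  set c := star b * b with hcdef
  have hc : IsSelfAdjoint c := IsSelfAdjoint.star_mul_self b
  set M := ‖c‖ with hM
  have hM0 : 0 ≤ M := norm_nonneg c
  -- spectral facts
  have hspec : ∀ u ∈ spectrum ℂ c, u.im = 0 ∧ 0 ≤ u.re ∧ u.re ≤ M := by
    intro u hu
    have him : u.im = 0 := hc.im_eq_zero_of_mem_spectrum hu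
    have hre : u.re ∈ spectrum ℝ c := by
      refine spectrum.of_algebraMap_mem ℂ ?_
      have : (algebraMap ℝ ℂ u.re) = u := Complex.ext rfl (by simp [him])
      rwa [this]
    have h0 : 0 ≤ u.re := spectrum_star_mul_self_nonneg u.re hre
    have h1 : ‖u‖ ≤ M := spectrum.norm_le_norm_of_mem hu
    refine ⟨him, h0, ?_⟩
    calc u.re ≤ |u.re| := le_abs_self _
      _ ≤ ‖u‖ := Complex.abs_re_le_norm u
      _ ≤ M := h1
  set p := (g c).re with hp
  set q := (g c).im with hq
  -- imaginary part is zero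
  have hA : ∀ s : ℝ, p ^ 2 + (q + s) ^ 2 ≤ M ^ 2 + s ^ 2 := by
    intro s
    have hRb : ∀ u ∈ spectrum ℂ c, ‖u + (s : ℂ) * Complex.I‖ ≤ Real.sqrt (M ^ 2 + s ^ 2) := by
      intro u hu
      obtain ⟨him, h0, h1⟩ := hspec u hu
      have : ‖u + (s : ℂ) * Complex.I‖ ^ 2 = u.re ^ 2 + s ^ 2 := by
        rw [← Complex.normSq_eq_norm_sq]
        simp [Complex.normSq_apply, him]
        ring
      have hle : ‖u + (s : ℂ) * Complex.I‖ ^ 2 ≤ M ^ 2 + s ^ 2 := by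
        rw [this]
        have : u.re ^ 2 ≤ M ^ 2 := by nlinarith
        linarith
      calc ‖u + (s : ℂ) * Complex.I‖
          = Real.sqrt (‖u + (s : ℂ) * Complex.I‖ ^ 2) :=
            (Real.sqrt_sq (norm_nonneg _)).symm
        _ ≤ Real.sqrt (M ^ 2 + s ^ 2) := Real.sqrt_le_sqrt hle
    have := aux_norm_add_le g hgn hg1 hc ((s : ℂ) * Complex.I) (Real.sqrt_nonneg _) hRb
    have hsq : ‖g c + (s : ℂ) * Complex.I‖ ^ 2 ≤ M ^ 2 + s ^ 2 := by
      calc ‖g c + (s : ℂ) * Complex.I‖ ^ 2 ≤ Real.sqrt (M ^ 2 + s ^ 2) ^ 2 := by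
            exact pow_le_pow_left₀ (norm_nonneg _) this 2
        _ = M ^ 2 + s ^ 2 := Real.sq_sqrt (by positivity)
    have hnorm : ‖g c + (s : ℂ) * Complex.I‖ ^ 2 = p ^ 2 + (q + s) ^ 2 := by
      rw [← Complex.normSq_eq_norm_sq]
      simp [Complex.normSq_apply]
      ring
    linarith [hnorm ▸ hsq]
  have hq0 : q = 0 := by
    by_contra hq0
    set s := (M ^ 2 + 1 - p ^ 2 - q ^ 2) / (2 * q) with hs
    have hqs : 2 * q * s = M ^ 2 + 1 - p ^ 2 - q ^ 2 := by
      rw [hs, mul_div_cancel₀ _ (mul_ne_zero two_ne_zero hq0)]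
    nlinarith [hA s]
  -- now positivity
  have hx : g c = (p : ℂ) := Complex.ext rfl (by simp [hq0.symm ▸ hq])
  have hB : ‖g c + (-(M : ℂ))‖ ≤ M := by
    refine aux_norm_add_le g hgn hg1 hc _ hM0 ?_
    intro u hu
    obtain ⟨him, h0, h1⟩ := hspec u hu
    have : u + (-(M : ℂ)) = ((u.re - M : ℝ) : ℂ) := by
      apply Complex.ext <;> simp [him, sub_eq_add_neg]
    rw [this, Complex.norm_real, Real.norm_eq_abs, abs_le]
    constructor <;> linarith
  have hp0 : 0 ≤ p := by
    rw [hx] at hB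
    have : ((p : ℂ)) + (-(M : ℂ)) = ((p - M : ℝ) : ℂ) := by push_cast; ring
    rw [this, Complex.norm_real, Real.norm_eq_abs, abs_le] at hB
    linarith [hB.1]
  exact ⟨p, hp0, hx⟩

end Aux

open StarAlgebra in
lemma aux_main {A : Type*} [CStarAlgebra A] [NormOneClass A] (a : A) (ha : star a = a) (α : ℝ)
    (hα : (α : ℂ) ∈ spectrum ℂ a) :
    ∃ φ : A →ₗ[ℂ] ℂ, (∀ b : A, ∃ r : ℝ, 0 ≤ r ∧ φ (star b * b) = (r : ℂ)) ∧
      φ 1 = 1 ∧ φ a = (α : ℂ) := by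
  have ha' : IsSelfAdjoint a := ha
  haveI : IsStarNormal a := ha'.isStarNormal
  haveI : NormOneClass (elemental ℂ a) := ⟨show ‖(1 : A)‖ = 1 from norm_one⟩
  obtain ⟨ψ, hψ⟩ := (elemental.bijective_characterSpaceToSpectrum a).2 ⟨(α : ℂ), hα⟩
  have hψa : ψ ⟨a, elemental.self_mem ℂ a⟩ = (α : ℂ) := congrArg Subtype.val hψ
  have hbound : ∀ x : elemental ℂ a, ‖ψ x‖ ≤ ‖x‖ := fun x =>
    spectrum.norm_le_norm_of_mem (AlgHom.apply_mem_spectrum ψ x)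
  set p : Subspace ℂ A := Subalgebra.toSubmodule (elemental ℂ a).toSubalgebra with hpdef
  let f₀ : p →ₗ[ℂ] ℂ :=
    { toFun := fun x => ψ ⟨x.1, x.2⟩
      map_add' := fun x y => map_add ψ ⟨x.1, x.2⟩ ⟨y.1, y.2⟩
      map_smul' := fun m x => map_smul ψ m ⟨x.1, x.2⟩ }
  let f : p →L[ℂ] ℂ := f₀.mkContinuous 1 (fun x => by
    rw [one_mul]; exact hbound ⟨x.1, x.2⟩)
  have hf : ‖f‖ ≤ 1 := f₀.mkContinuous_norm_le zero_le_one _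
  obtain ⟨g, hg, hgnorm⟩ := exists_extension_norm_eq p f
  have hgn : ‖g‖ ≤ 1 := hgnorm ▸ hf
  have hg' : ∀ (x : A) (hx : x ∈ elemental ℂ a), g x = ψ ⟨x, hx⟩ := fun x hx =>
    hg ⟨x, hx⟩
  have hg1 : g 1 = 1 := by rw [hg' 1 (one_mem _)]; exact map_one ψ
  have hga : g a = (α : ℂ) := by rw [hg' a (elemental.self_mem ℂ a)]; exact hψa
  exact ⟨g.toLinearMap, aux_pos g hgn hg1, hg1, hga⟩

/-- For a self-adjoint element `a` of a unital C*-algebra and a real number `α`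
in the spectrum of `a`, there is a state taking the value `α` at `a`. -/
theorem stmt_6 {A : Type*} [NormedRing A] [NormOneClass A] [CompleteSpace A]
    [StarRing A] [CStarRing A] [NormedAlgebra ℂ A] [StarModule ℂ A]
    (a : A) (ha : star a = a) (α : ℝ) (hα : (α : ℂ) ∈ spectrum ℂ a) :
    ∃ φ : A →ₗ[ℂ] ℂ, (∀ b : A, ∃ r : ℝ, 0 ≤ r ∧ φ (star b * b) = (r : ℂ)) ∧
      φ 1 = 1 ∧ φ a = (α : ℂ) := by
  letI : CStarAlgebra A :=
    { ‹NormedRing A›, ‹StarRing A›, ‹CStarRing A›, ‹NormedAlgebra ℂ A›,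
      ‹StarModule ℂ A›, ‹CompleteSpace A› with }
  exact aux_main a ha α hα
end

section
/- (GNS uniqueness) Let A be a unital C*-algebra over ℂ and let ω be a state on A. Suppose (H₁, π₁, ψ₁) and (H₂, π₂, ψ₂) are two triples where Hᵢ is a complex Hilbert space, πᵢ is a unital star-algebra homomorphism from A to the bounded linear operators on Hᵢ, ψᵢ ∈ Hᵢ is a unit vector cyclic for πᵢ (the set {πᵢ(a)ψᵢ : a ∈ A} is dense in Hᵢ), and ⟪ψᵢ, πᵢ(a)ψᵢ⟫ = ω(a) for all a ∈ A. Then there exists a unitary operator U : H₁ → H₂ (a linear isometric bijection) such that U ψ₁ = ψ₂ and π₂(a) = U ∘ π₁(a) ∘ U⁻¹ for every a ∈ A. -/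
open scoped InnerProductSpace

noncomputable section

/-- Extend a norm-compatible pair of linear maps with dense range to a linear isometry. -/
theorem gns_extend_aux {A : Type*} [AddCommGroup A] [Module ℂ A]
    {H₁ : Type*} [NormedAddCommGroup H₁] [NormedSpace ℂ H₁]
    {H₂ : Type*} [NormedAddCommGroup H₂] [NormedSpace ℂ H₂] [CompleteSpace H₂]
    (S₁ : A →ₗ[ℂ] H₁) (S₂ : A →ₗ[ℂ] H₂) (hnorm : ∀ a, ‖S₂ a‖ = ‖S₁ a‖)
    (hd : DenseRange S₁) : ∃ U : H₁ →ₗᵢ[ℂ] H₂, ∀ a, U (S₁ a) = S₂ a := by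
  have hker : LinearMap.ker S₁ ≤ LinearMap.ker S₂ := by
    intro a ha
    have h1 : S₁ a = 0 := ha
    have : ‖S₂ a‖ = 0 := by rw [hnorm, h1, norm_zero]
    simpa [LinearMap.mem_ker] using norm_eq_zero.mp this
  set p := LinearMap.range S₁ with hp
  let T₀ : (A ⧸ LinearMap.ker S₁) →ₗ[ℂ] H₂ := (LinearMap.ker S₁).liftQ S₂ hker
  let T : p →ₗ[ℂ] H₂ := T₀ ∘ₗ (S₁.quotKerEquivRange.symm : p →ₗ[ℂ] (A ⧸ LinearMap.ker S₁))
  have hT : ∀ (a : A) (h : S₁ a ∈ p), T ⟨S₁ a, h⟩ = S₂ a := by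
    intro a h
    have h1 : S₁.quotKerEquivRange.symm ⟨S₁ a, h⟩ = (LinearMap.ker S₁).mkQ a :=
      S₁.quotKerEquivRange_symm_apply_image a h
    simp only [T, LinearMap.coe_comp, Function.comp_apply, LinearEquiv.coe_coe, h1]
    simp [T₀, Submodule.mkQ_apply]
  have hTnorm : ∀ x : p, ‖T x‖ = ‖x‖ := by
    rintro ⟨x, hx⟩
    obtain ⟨a, rfl⟩ := hx
    rw [hT a ⟨a, rfl⟩, hnorm]
    rfl
  let Ti : p →ₗᵢ[ℂ] H₂ := ⟨T, hTnorm⟩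
  let e : p →L[ℂ] H₁ := p.subtypeL
  have h_e : IsUniformInducing e := isometry_subtype_coe.isUniformInducing
  have h_dense : DenseRange e := by
    have : (e : p → H₁) = Subtype.val := rfl
    rw [DenseRange, this, Subtype.range_coe]
    have : (p : Set H₁) = Set.range S₁ := LinearMap.coe_range S₁
    rw [this]
    exact hd
  let U' : H₁ →L[ℂ] H₂ := Ti.toContinuousLinearMap.extend e
  have hU'e : ∀ x : p, U' (e x) = Ti x := fun x =>
    ContinuousLinearMap.extend_eq _ (e := e) h_dense h_e x
  have hUnorm : ∀ x : H₁, ‖U' x‖ = ‖x‖ := by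
    intro x
    refine h_dense.induction_on x ?_ ?_
    · exact isClosed_eq (continuous_norm.comp U'.continuous) continuous_norm
    · intro y
      rw [hU'e y, Ti.norm_map]
      rfl
  refine ⟨⟨U'.toLinearMap, hUnorm⟩, fun a => ?_⟩
  have hmem : S₁ a ∈ p := ⟨a, rfl⟩
  have : S₁ a = e ⟨S₁ a, hmem⟩ := rfl
  show U' (S₁ a) = S₂ a
  rw [this, hU'e]
  exact hT a hmem

end

/-- GNS uniqueness: two cyclic representations realizing the same state `ω` are
unitarily equivalent via a unitary carrying one cyclic vector to the other. -/
theorem stmt_9 {A : Type*} [NormedRing A] [NormOneClass A] [CompleteSpace A]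
    [StarRing A] [CStarRing A] [NormedAlgebra ℂ A] [StarModule ℂ A]
    (ω : A →ₗ[ℂ] ℂ)
    {H₁ : Type*} [NormedAddCommGroup H₁] [InnerProductSpace ℂ H₁] [CompleteSpace H₁]
    {H₂ : Type*} [NormedAddCommGroup H₂] [InnerProductSpace ℂ H₂] [CompleteSpace H₂]
    (π₁ : A →⋆ₐ[ℂ] (H₁ →L[ℂ] H₁)) (π₂ : A →⋆ₐ[ℂ] (H₂ →L[ℂ] H₂))
    (ψ₁ : H₁) (ψ₂ : H₂)
    (hψ₁ : ‖ψ₁‖ = 1) (hψ₂ : ‖ψ₂‖ = 1)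
    (hcyc₁ : DenseRange fun a : A => π₁ a ψ₁)
    (hcyc₂ : DenseRange fun a : A => π₂ a ψ₂)
    (hω₁ : ∀ a : A, ⟪ψ₁, π₁ a ψ₁⟫_ℂ = ω a)
    (hω₂ : ∀ a : A, ⟪ψ₂, π₂ a ψ₂⟫_ℂ = ω a) :
    ∃ U : H₁ ≃ₗᵢ[ℂ] H₂, U ψ₁ = ψ₂ ∧
      ∀ a : A, (π₂ a : H₂ → H₂) = U ∘ (π₁ a : H₁ → H₁) ∘ U.symm := by
  classical
  -- the two "orbit" maps
  let S₁ : A →ₗ[ℂ] H₁ :=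
    { toFun := fun a => π₁ a ψ₁
      map_add' := fun a b => by simp [map_add]
      map_smul' := fun c a => by simp [map_smul] }
  let S₂ : A →ₗ[ℂ] H₂ :=
    { toFun := fun a => π₂ a ψ₂
      map_add' := fun a b => by simp [map_add]
      map_smul' := fun c a => by simp [map_smul] }
  -- inner products through ω
  have hinner₁ : ∀ a b : A, ⟪S₁ a, S₁ b⟫_ℂ = ω (star a * b) := by
    intro a b
    have hadj : π₁ (star a) = ContinuousLinearMap.adjoint (π₁ a) := by
      rw [map_star, ← ContinuousLinearMap.star_eq_adjoint]
    calc ⟪π₁ a ψ₁, π₁ b ψ₁⟫_ℂ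
        = ⟪ψ₁, ContinuousLinearMap.adjoint (π₁ a) (π₁ b ψ₁)⟫_ℂ :=
          (ContinuousLinearMap.adjoint_inner_right _ _ _).symm
      _ = ⟪ψ₁, π₁ (star a * b) ψ₁⟫_ℂ := by rw [← hadj, map_mul]; rfl
      _ = ω (star a * b) := hω₁ _
  have hinner₂ : ∀ a b : A, ⟪S₂ a, S₂ b⟫_ℂ = ω (star a * b) := by
    intro a b
    have hadj : π₂ (star a) = ContinuousLinearMap.adjoint (π₂ a) := by
      rw [map_star, ← ContinuousLinearMap.star_eq_adjoint]
    calc ⟪π₂ a ψ₂, π₂ b ψ₂⟫_ℂ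
        = ⟪ψ₂, ContinuousLinearMap.adjoint (π₂ a) (π₂ b ψ₂)⟫_ℂ :=
          (ContinuousLinearMap.adjoint_inner_right _ _ _).symm
      _ = ⟪ψ₂, π₂ (star a * b) ψ₂⟫_ℂ := by rw [← hadj, map_mul]; rfl
      _ = ω (star a * b) := hω₂ _
  have hnorm : ∀ a : A, ‖S₂ a‖ = ‖S₁ a‖ := by
    intro a
    rw [@norm_eq_sqrt_re_inner ℂ, @norm_eq_sqrt_re_inner ℂ, hinner₁ a a, hinner₂ a a]
  have hnorm' : ∀ a : A, ‖S₁ a‖ = ‖S₂ a‖ := fun a => (hnorm a).symm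
  obtain ⟨U₀, hU₀⟩ := gns_extend_aux S₁ S₂ hnorm hcyc₁
  obtain ⟨V, hV⟩ := gns_extend_aux S₂ S₁ hnorm' hcyc₂
  -- U₀ ∘ V = id
  have hUV : ∀ y : H₂, U₀ (V y) = y := by
    intro y
    refine hcyc₂.induction_on y ?_ ?_
    · exact isClosed_eq (U₀.continuous.comp V.continuous) continuous_id
    · intro a
      show U₀ (V (S₂ a)) = S₂ a
      rw [hV, hU₀]
  have hsurj : Function.Surjective U₀ := fun y => ⟨V y, hUV y⟩
  let U : H₁ ≃ₗᵢ[ℂ] H₂ := LinearIsometryEquiv.ofSurjective U₀ hsurj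
  have hUcoe : ⇑U = ⇑U₀ := LinearIsometryEquiv.coe_ofSurjective U₀ hsurj
  have hUψ : U ψ₁ = ψ₂ := by
    have h1 : ψ₁ = S₁ 1 := by
      show ψ₁ = π₁ 1 ψ₁
      rw [map_one]; rfl
    have h2 : S₂ 1 = ψ₂ := by
      show π₂ 1 ψ₂ = ψ₂
      rw [map_one]; rfl
    rw [hUcoe, h1, hU₀, h2]
  -- intertwining on the dense set
  have hint : ∀ (a : A) (x : H₁), π₂ a (U₀ x) = U₀ (π₁ a x) := by
    intro a x
    refine hcyc₁.induction_on x ?_ ?_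
    · exact isClosed_eq ((π₂ a).continuous.comp U₀.continuous)
        (U₀.continuous.comp (π₁ a).continuous)
    · intro b
      show π₂ a (U₀ (S₁ b)) = U₀ (π₁ a (S₁ b))
      have h1 : π₁ a (S₁ b) = S₁ (a * b) := by
        show π₁ a (π₁ b ψ₁) = π₁ (a * b) ψ₁
        rw [map_mul]; rfl
      have h2 : π₂ a (S₂ b) = S₂ (a * b) := by
        show π₂ a (π₂ b ψ₂) = π₂ (a * b) ψ₂
        rw [map_mul]; rfl
      rw [hU₀, h1, hU₀, h2]
  refine ⟨U, hUψ, fun a => ?_⟩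
  funext y
  have : y = U (U.symm y) := (U.apply_symm_apply y).symm
  calc π₂ a y = π₂ a (U (U.symm y)) := by rw [← this]
    _ = U₀ (π₁ a (U.symm y)) := by rw [hUcoe]; exact hint a (U.symm y)
    _ = U (π₁ a (U.symm y)) := by rw [hUcoe]
end

section
/- (Riesz representation theorem, positive case) Let X be a compact Hausdorff topological space and let Λ : C(X, ℝ) → ℝ be a positive linear functional on the space of continuous real-valued functions on X, i.e. Λ(f) ≥ 0 whenever f(x) ≥ 0 for all x ∈ X. Then there exists a unique regular finite Borel measure μ on X such that Λ(f) = ∫ f dμ for every f ∈ C(X, ℝ). -/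
open MeasureTheory Set TopologicalSpace
open scoped ENNReal NNReal

set_option linter.unusedSectionVars false

namespace RMK11

variable {X : Type*} [TopologicalSpace X] [CompactSpace X] [T2Space X]

/-- The set of test functions for a set `K`: nonnegative continuous functions that are
at least `1` on `K`. -/
def T (K : Set X) : Set C(X, ℝ) := {f | (∀ x, 0 ≤ f x) ∧ ∀ x ∈ K, 1 ≤ f x}

lemma one_mem_T (K : Set X) : (1 : C(X, ℝ)) ∈ T K :=
  ⟨fun x => by simp, fun x _ => by simp⟩

variable (Λ : C(X, ℝ) →ₗ[ℝ] ℝ)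

/-- The Riesz content of a set. -/
noncomputable def rc (K : Set X) : ℝ := sInf (Λ '' T K)

lemma image_nonempty (K : Set X) : (Λ '' T K).Nonempty := ⟨Λ 1, 1, one_mem_T K, rfl⟩

variable (hΛ : ∀ f : C(X, ℝ), (∀ x : X, 0 ≤ f x) → 0 ≤ Λ f)

include hΛ

lemma lam_mono {f g : C(X, ℝ)} (h : ∀ x, f x ≤ g x) : Λ f ≤ Λ g := by
  have h0 := hΛ (g - f) (fun x => by
    simp only [ContinuousMap.sub_apply]
    linarith [h x])
  rw [map_sub] at h0
  linarith

lemma bddBelow_image (K : Set X) : BddBelow (Λ '' T K) := by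
  refine ⟨0, ?_⟩
  rintro y ⟨f, hf, rfl⟩
  exact hΛ f hf.1

lemma rc_nonneg (K : Set X) : 0 ≤ rc Λ K := by
  refine le_csInf (image_nonempty Λ K) ?_
  rintro y ⟨f, hf, rfl⟩
  exact hΛ f hf.1

lemma rc_le {K : Set X} {f : C(X, ℝ)} (hf : f ∈ T K) : rc Λ K ≤ Λ f :=
  csInf_le (bddBelow_image Λ hΛ K) ⟨f, hf, rfl⟩

lemma rc_mono {K₁ K₂ : Set X} (h : K₁ ⊆ K₂) : rc Λ K₁ ≤ rc Λ K₂ := by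
  refine csInf_le_csInf (bddBelow_image Λ hΛ K₁) (image_nonempty Λ K₂) ?_
  exact image_mono (fun f hf => ⟨hf.1, fun x hx => hf.2 x (h hx)⟩)

lemma exists_near (K : Set X) {ε : ℝ} (hε : 0 < ε) :
    ∃ f ∈ T K, Λ f < rc Λ K + ε := by
  obtain ⟨y, hy, hlt⟩ := exists_lt_of_csInf_lt (image_nonempty Λ K)
    (lt_add_of_pos_right (rc Λ K) hε)
  obtain ⟨f, hf, rfl⟩ := hy
  exact ⟨f, hf, hlt⟩

lemma rc_union_le (K₁ K₂ : Set X) : rc Λ (K₁ ∪ K₂) ≤ rc Λ K₁ + rc Λ K₂ := by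
  refine le_of_forall_pos_le_add (fun ε hε => ?_)
  obtain ⟨f₁, hf₁, h₁⟩ := exists_near Λ hΛ K₁ (half_pos hε)
  obtain ⟨f₂, hf₂, h₂⟩ := exists_near Λ hΛ K₂ (half_pos hε)
  have hmem : f₁ + f₂ ∈ T (K₁ ∪ K₂) := by
    refine ⟨fun x => by
      simp only [ContinuousMap.add_apply]
      exact add_nonneg (hf₁.1 x) (hf₂.1 x), ?_⟩
    rintro x (hx | hx) <;> simp only [ContinuousMap.add_apply]
    · linarith [hf₁.2 x hx, hf₂.1 x]
    · linarith [hf₂.2 x hx, hf₁.1 x]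
  calc rc Λ (K₁ ∪ K₂) ≤ Λ (f₁ + f₂) := rc_le Λ hΛ hmem
    _ = Λ f₁ + Λ f₂ := map_add Λ f₁ f₂
    _ ≤ rc Λ K₁ + rc Λ K₂ + ε := by linarith

lemma rc_union_disjoint {K₁ K₂ : Set X} (h₁ : IsClosed K₁) (h₂ : IsClosed K₂)
    (hd : Disjoint K₁ K₂) : rc Λ K₁ + rc Λ K₂ ≤ rc Λ (K₁ ∪ K₂) := by
  obtain ⟨g, hg2, hg1, hg01⟩ := exists_continuous_zero_one_of_isClosed h₂ h₁ hd.symm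
  refine le_csInf (image_nonempty Λ _) ?_
  rintro y ⟨f, hf, rfl⟩
  have hfg₁ : f * g ∈ T K₁ := by
    refine ⟨fun x => by
      simp only [ContinuousMap.mul_apply]
      exact mul_nonneg (hf.1 x) (hg01 x).1, fun x hx => ?_⟩
    have h1 : g x = 1 := hg1 hx
    have h2 : (1 : ℝ) ≤ f x := hf.2 x (Or.inl hx)
    simp only [ContinuousMap.mul_apply, h1, mul_one]
    exact h2
  have hfg₂ : f * (1 - g) ∈ T K₂ := by
    refine ⟨fun x => by
      simp only [ContinuousMap.mul_apply, ContinuousMap.sub_apply, ContinuousMap.one_apply]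
      exact mul_nonneg (hf.1 x) (by linarith [(hg01 x).2]), fun x hx => ?_⟩
    have h1 : g x = 0 := hg2 hx
    have h2 : (1 : ℝ) ≤ f x := hf.2 x (Or.inr hx)
    simp only [ContinuousMap.mul_apply, ContinuousMap.sub_apply, ContinuousMap.one_apply, h1]
    linarith
  have hsum : f * g + f * (1 - g) = f := by ring
  calc rc Λ K₁ + rc Λ K₂ ≤ Λ (f * g) + Λ (f * (1 - g)) :=
        add_le_add (rc_le Λ hΛ hfg₁) (rc_le Λ hΛ hfg₂)
    _ = Λ (f * g + f * (1 - g)) := (map_add Λ _ _).symm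
    _ = Λ f := by rw [hsum]

/-- The Riesz content as a `Content`. -/
noncomputable def rieszContent : Content X where
  toFun K := ⟨rc Λ K, rc_nonneg Λ hΛ K⟩
  mono' K₁ K₂ h := by
    exact NNReal.coe_le_coe.1 (rc_mono Λ hΛ h)
  sup_disjoint' K₁ K₂ hd hc₁ hc₂ := by
    ext
    simp only [NNReal.coe_add, Compacts.coe_sup]
    exact le_antisymm (rc_union_le Λ hΛ K₁ K₂) (rc_union_disjoint Λ hΛ hc₁ hc₂ hd)
  sup_le' K₁ K₂ := by
    exact NNReal.coe_le_coe.1 (rc_union_le Λ hΛ (K₁ : Set X) K₂)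

variable [MeasurableSpace X] [BorelSpace X]

/-- The Riesz measure. -/
noncomputable def μR : Measure X := (rieszContent Λ hΛ).measure

lemma μR_finite : IsFiniteMeasure (μR Λ hΛ) := by
  constructor
  rw [μR, Content.measure_apply _ MeasurableSet.univ]
  refine lt_of_le_of_lt (Content.outerMeasure_le _ ⟨univ, isOpen_univ⟩ ⟨univ, isCompact_univ⟩
    subset_rfl) ?_
  exact Content.lt_top _ _

lemma rc_le_measure {K : Set X} (hK : IsCompact K) : rc Λ K ≤ ((μR Λ hΛ) K).toReal := by
  haveI := μR_finite Λ hΛ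
  have h1 : ((rieszContent Λ hΛ) ⟨K, hK⟩ : ℝ≥0∞) ≤ (μR Λ hΛ) K := by
    rw [μR, Content.measure_apply _ hK.isClosed.measurableSet]
    exact (rieszContent Λ hΛ).le_outerMeasure_compacts ⟨K, hK⟩
  have h2 := ENNReal.toReal_mono (measure_ne_top _ _) h1
  exact h2

lemma lam_le_measure {K : Set X} (hK : IsClosed K) {h : C(X, ℝ)}
    (h0 : ∀ x, 0 ≤ h x) (h1 : ∀ x, h x ≤ 1) (hvan : ∀ x, x ∉ K → h x = 0) :
    Λ h ≤ ((μR Λ hΛ) K).toReal := by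
  refine le_trans ?_ (rc_le_measure Λ hΛ hK.isCompact)
  refine le_csInf (image_nonempty Λ K) ?_
  rintro y ⟨f, hf, rfl⟩
  refine lam_mono Λ hΛ (fun x => ?_)
  by_cases hx : x ∈ K
  · exact le_trans (h1 x) (hf.2 x hx)
  · rw [hvan x hx]; exact hf.1 x

lemma measure_le_lam {K : Set X} (hK : IsClosed K) {f : C(X, ℝ)} (hf : f ∈ T K) :
    ((μR Λ hΛ) K).toReal ≤ Λ f := by
  haveI := μR_finite Λ hΛ
  have hΛf : 0 ≤ Λ f := hΛ f hf.1
  have main : ∀ c : ℝ, 0 < c → c < 1 → ((μR Λ hΛ) K).toReal ≤ c⁻¹ * Λ f := by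
    intro c hc0 hc1
    set U : Set X := f ⁻¹' Ioi c with hUdef
    have hU : IsOpen U := f.continuous.isOpen_preimage _ isOpen_Ioi
    have hKU : K ⊆ U := fun x hx => lt_of_lt_of_le hc1 (hf.2 x hx)
    have h2 : (μR Λ hΛ) K ≤ (μR Λ hΛ) U := measure_mono hKU
    have h3 : (μR Λ hΛ) U = (rieszContent Λ hΛ).innerContent ⟨U, hU⟩ := by
      rw [μR, Content.measure_apply _ hU.measurableSet,
        (rieszContent Λ hΛ).outerMeasure_of_isOpen U hU]
    have h4 : (rieszContent Λ hΛ).innerContent ⟨U, hU⟩ ≤ ENNReal.ofReal (c⁻¹ * Λ f) := by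
      refine iSup₂_le (fun K' hK' => ?_)
      have hmem : c⁻¹ • f ∈ T (K' : Set X) := by
        refine ⟨fun x => by
          simp only [ContinuousMap.smul_apply, smul_eq_mul]
          exact mul_nonneg (inv_nonneg.2 hc0.le) (hf.1 x), fun x hx => ?_⟩
        have hfx : c < f x := hK' hx
        simp only [ContinuousMap.smul_apply, smul_eq_mul]
        rw [← inv_mul_cancel₀ hc0.ne']
        exact mul_le_mul_of_nonneg_left hfx.le (inv_nonneg.2 hc0.le)
      have h5 : rc Λ (K' : Set X) ≤ c⁻¹ * Λ f := by
        have := rc_le Λ hΛ hmem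
        rwa [Λ.map_smul, smul_eq_mul] at this
      have h6 : ((rieszContent Λ hΛ) K' : ℝ≥0∞) = ENNReal.ofReal (rc Λ (K' : Set X)) := by
        rw [show ((rieszContent Λ hΛ) K' : ℝ≥0∞) = ((rieszContent Λ hΛ).toFun K' : ℝ≥0∞) from rfl]
        simp only [rieszContent]
        rw [ENNReal.ofReal, Real.toNNReal_of_nonneg (rc_nonneg Λ hΛ _)]
        rfl
      rw [h6]
      exact ENNReal.ofReal_le_ofReal h5
    have h7 : (μR Λ hΛ) K ≤ ENNReal.ofReal (c⁻¹ * Λ f) := h2.trans (h3 ▸ h4)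
    exact ENNReal.toReal_le_of_le_ofReal (mul_nonneg (inv_nonneg.2 hc0.le) hΛf) h7
  by_contra hcon
  push_neg at hcon
  set m := ((μR Λ hΛ) K).toReal with hm
  have hm0 : 0 < m := lt_of_le_of_lt hΛf hcon
  obtain ⟨c, hc1, hc2⟩ := exists_between ((div_lt_one hm0).2 hcon)
  have hc0 : 0 < c := lt_of_le_of_lt (div_nonneg hΛf hm0.le) hc1
  have hkey := main c hc0 hc2
  have hlt : Λ f < c * m := (div_lt_iff₀ hm0).1 hc1
  have : c⁻¹ * Λ f < c⁻¹ * (c * m) := by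
    exact mul_lt_mul_of_pos_left hlt (inv_pos.2 hc0)
  rw [← mul_assoc, inv_mul_cancel₀ hc0.ne', one_mul] at this
  linarith

omit hΛ in
lemma clamp_sum (n : ℕ) (t : ℝ) :
    ∑ i ∈ Finset.range n, min (max (t - i) 0) 1 = min (max t 0) n := by
  induction n with
  | zero => simp
  | succ n ih =>
    rw [Finset.sum_range_succ, ih]
    push_cast
    rcases le_total t n with h | h
    · have h1 : max (t - n) 0 = 0 := max_eq_right (by linarith)
      have h2 : max t 0 ≤ (n : ℝ) := max_le h (Nat.cast_nonneg n)
      rw [h1, min_eq_left zero_le_one, min_eq_left h2, min_eq_left (by linarith), add_zero]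
    · have h0 : (0 : ℝ) ≤ t := le_trans (Nat.cast_nonneg n) h
      rw [max_eq_left (by linarith : (0:ℝ) ≤ t - n), max_eq_left h0, min_eq_right h]
      rcases le_total t ((n : ℝ) + 1) with h2 | h2
      · rw [min_eq_left (by linarith), min_eq_left h2]
        ring
      · rw [min_eq_right (by linarith), min_eq_right h2]

omit hΛ in
lemma integrable_cm (μ : Measure X) [IsFiniteMeasure μ] (f : C(X, ℝ)) :
    Integrable (fun x => f x) μ := by
  have := (BoundedContinuousFunction.mkOfCompact f).integrable μ
  exact this

lemma lam_one_eq : Λ 1 = ((μR Λ hΛ) univ).toReal := by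
  refine le_antisymm ?_ ?_
  · exact lam_le_measure Λ hΛ isClosed_univ (fun x => by simp) (fun x => by simp)
      (fun x hx => absurd (mem_univ x) hx)
  · exact measure_le_lam Λ hΛ isClosed_univ (one_mem_T univ)

lemma lam_le_integral {g : C(X, ℝ)} (hg0 : ∀ x, 0 ≤ g x) (hg1 : ∀ x, g x ≤ 1) :
    Λ g ≤ ∫ x, g x ∂(μR Λ hΛ) := by
  haveI := μR_finite Λ hΛ
  set μ := μR Λ hΛ with hμdef
  have key : ∀ n : ℕ, (n : ℝ) * Λ g ≤ ((μ univ).toReal) + (n : ℝ) * ∫ x, g x ∂μ := by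
    intro n
    rcases Nat.eq_zero_or_pos n with rfl | hn
    · simp [ENNReal.toReal_nonneg]
    set φ : ℕ → C(X, ℝ) := fun i =>
      ⟨fun x => min (max ((n : ℝ) * g x - i) 0) 1, by
        apply Continuous.min
        · exact Continuous.max (by continuity) continuous_const
        · exact continuous_const⟩ with hφdef
    set K : ℕ → Set X := fun j => {x | (j : ℝ) ≤ (n : ℝ) * g x} with hKdef
    have hKclosed : ∀ j, IsClosed (K j) :=
      fun j => isClosed_le continuous_const (continuous_const.mul g.continuous)
    have hφ0 : ∀ i x, 0 ≤ φ i x := fun i x => le_min (le_max_right _ _) zero_le_one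
    have hφ1 : ∀ i x, φ i x ≤ 1 := fun i x => min_le_right _ _
    have hφ_one : ∀ i x, x ∈ K (i + 1) → φ i x = 1 := by
      intro i x hx
      have hx' : ((i : ℝ) + 1) ≤ (n : ℝ) * g x := by
        have := hx
        simp only [hKdef, mem_setOf_eq] at this
        push_cast at this
        exact this
      show min (max ((n : ℝ) * g x - i) 0) 1 = 1
      rw [max_eq_left (by linarith), min_eq_right (by linarith)]
    have hφ_zero : ∀ i x, x ∉ K i → φ i x = 0 := by
      intro i x hx
      have hx' : (n : ℝ) * g x < i := by
        simp only [hKdef, mem_setOf_eq, not_le] at hx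
        exact hx
      show min (max ((n : ℝ) * g x - i) 0) 1 = 0
      rw [max_eq_right (by linarith), min_eq_left zero_le_one]
    have hsum : ∀ x, ∑ i ∈ Finset.range n, φ i x = (n : ℝ) * g x := by
      intro x
      have h1 := clamp_sum n ((n : ℝ) * g x)
      have h2 : max ((n : ℝ) * g x) 0 = (n : ℝ) * g x :=
        max_eq_left (mul_nonneg (Nat.cast_nonneg n) (hg0 x))
      have h3 : min ((n : ℝ) * g x) (n : ℝ) = (n : ℝ) * g x := by
        refine min_eq_left ?_
        nlinarith [hg1 x, Nat.cast_nonneg (α := ℝ) n]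
      calc ∑ i ∈ Finset.range n, φ i x
          = ∑ i ∈ Finset.range n, min (max ((n : ℝ) * g x - i) 0) 1 := rfl
        _ = min (max ((n : ℝ) * g x) 0) n := h1
        _ = (n : ℝ) * g x := by rw [h2, h3]
    -- Λ side
    have hφsum : (∑ i ∈ Finset.range n, φ i) = (n : ℝ) • g := by
      ext x
      simp only [ContinuousMap.coe_sum, Finset.sum_apply, ContinuousMap.smul_apply, smul_eq_mul]
      exact hsum x
    have hΛsum : ∑ i ∈ Finset.range n, Λ (φ i) = (n : ℝ) * Λ g := by
      rw [← map_sum, hφsum, Λ.map_smul, smul_eq_mul]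
    have hup : ∀ i, Λ (φ i) ≤ (μ (K i)).toReal := fun i =>
      lam_le_measure Λ hΛ (hKclosed i) (hφ0 i) (hφ1 i) (hφ_zero i)
    have hlow : ∀ i, (μ (K (i + 1))).toReal ≤ ∫ x, φ i x ∂μ := by
      intro i
      have hind : ∀ x, (K (i + 1)).indicator (fun _ => (1 : ℝ)) x ≤ φ i x := by
        intro x
        by_cases hx : x ∈ K (i + 1)
        · rw [indicator_of_mem hx, hφ_one i x hx]
        · rw [indicator_of_notMem hx]; exact hφ0 i x
      have hmeas : MeasurableSet (K (i + 1)) := (hKclosed (i + 1)).measurableSet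
      calc (μ (K (i + 1))).toReal
          = ∫ x, (K (i + 1)).indicator (fun _ => (1 : ℝ)) x ∂μ := by
            rw [integral_indicator_const (1 : ℝ) hmeas, smul_eq_mul, mul_one, measureReal_def]
        _ ≤ ∫ x, φ i x ∂μ := by
            refine integral_mono ?_ (integrable_cm μ (φ i)) hind
            exact (integrable_const (1 : ℝ)).indicator hmeas
    -- integral side
    have hIsum : ∑ i ∈ Finset.range n, ∫ x, φ i x ∂μ = (n : ℝ) * ∫ x, g x ∂μ := by
      rw [← integral_finset_sum _ (fun i _ => integrable_cm μ (φ i))]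
      rw [← integral_const_mul]
      congr 1
      ext x
      exact hsum x
    -- assemble
    have hK0 : K 0 = univ := by
      ext x
      simp only [hKdef, mem_setOf_eq, Nat.cast_zero, mem_univ, iff_true]
      exact mul_nonneg (Nat.cast_nonneg n) (hg0 x)
    obtain ⟨m, rfl⟩ := Nat.exists_eq_succ_of_ne_zero hn.ne'
    have step1 : (↑(m + 1) : ℝ) * Λ g ≤ ∑ i ∈ Finset.range (m + 1), (μ (K i)).toReal := by
      rw [← hΛsum]
      exact Finset.sum_le_sum (fun i _ => hup i)
    have step2 : ∑ i ∈ Finset.range (m + 1), (μ (K i)).toReal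
        = (μ univ).toReal + ∑ i ∈ Finset.range m, (μ (K (i + 1))).toReal := by
      rw [Finset.sum_range_succ' (fun i => (μ (K i)).toReal) m, hK0, add_comm]
    have step3 : ∑ i ∈ Finset.range m, (μ (K (i + 1))).toReal
        ≤ ∑ i ∈ Finset.range (m + 1), (μ (K (i + 1))).toReal := by
      refine Finset.sum_le_sum_of_subset_of_nonneg (Finset.range_subset_range.2 (Nat.le_succ m)) ?_
      intro i _ _
      exact ENNReal.toReal_nonneg
    have step4 : ∑ i ∈ Finset.range (m + 1), (μ (K (i + 1))).toReal
        ≤ (↑(m + 1) : ℝ) * ∫ x, g x ∂μ := by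
      rw [← hIsum]
      exact Finset.sum_le_sum (fun i _ => hlow i)
    linarith
  by_contra hcon
  push_neg at hcon
  set d := Λ g - ∫ x, g x ∂μ with hd
  have hd0 : 0 < d := by simp only [hd]; linarith
  obtain ⟨n, hn⟩ := exists_nat_gt ((μ univ).toReal / d)
  have h1 : (μ univ).toReal < d * (n : ℝ) := by
    rw [div_lt_iff₀ hd0] at hn; linarith [mul_comm d (n:ℝ)]
  have h2 := key n
  have h3 : d * (n : ℝ) = (n : ℝ) * Λ g - (n : ℝ) * ∫ x, g x ∂μ := by
    simp only [hd]; ring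
  linarith

lemma lam_le_integral' (f : C(X, ℝ)) : Λ f ≤ ∫ x, f x ∂(μR Λ hΛ) := by
  haveI := μR_finite Λ hΛ
  set μ := μR Λ hΛ with hμdef
  set M := ‖f‖ with hM
  have hM0 : 0 ≤ M := norm_nonneg f
  have hMx : ∀ x, |f x| ≤ M := fun x => f.norm_coe_le_norm x
  set c : ℝ := 2 * M + 1 with hc
  have hc0 : 0 < c := by linarith
  set g : C(X, ℝ) := c⁻¹ • (f + ContinuousMap.const X M) with hg
  have hgx : ∀ x, g x = c⁻¹ * (f x + M) := fun x => by
    simp only [hg, ContinuousMap.smul_apply, ContinuousMap.add_apply,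
      ContinuousMap.const_apply, smul_eq_mul]
  have hg0 : ∀ x, 0 ≤ g x := by
    intro x
    rw [hgx x]
    have := abs_le.1 (hMx x)
    exact mul_nonneg (inv_nonneg.2 hc0.le) (by linarith)
  have hg1 : ∀ x, g x ≤ 1 := by
    intro x
    rw [hgx x]
    have := abs_le.1 (hMx x)
    have h1 : f x + M ≤ c := by simp only [hc]; linarith
    calc c⁻¹ * (f x + M) ≤ c⁻¹ * c :=
          mul_le_mul_of_nonneg_left h1 (inv_nonneg.2 hc0.le)
      _ = 1 := inv_mul_cancel₀ hc0.ne'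
  have hfg : ∀ x, f x = c * g x - M := by
    intro x
    rw [hgx x]
    field_simp
    ring
  have hfeq : f = c • g - (M : ℝ) • (1 : C(X, ℝ)) := by
    ext x
    simp only [ContinuousMap.sub_apply, ContinuousMap.smul_apply, smul_eq_mul,
      ContinuousMap.one_apply, mul_one]
    exact hfg x
  have h1 : Λ f = c * Λ g - M * Λ 1 := by
    simp only [hfeq, map_sub, Λ.map_smul, smul_eq_mul]
  have h2 : ∫ x, f x ∂μ = c * (∫ x, g x ∂μ) - M * (μ univ).toReal := by
    have : ∀ x, f x = c * g x - M := hfg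
    calc ∫ x, f x ∂μ = ∫ x, (c * g x - M) ∂μ := by
          refine integral_congr_ae (Filter.Eventually.of_forall this)
      _ = ∫ x, c * g x ∂μ - ∫ _x, (M : ℝ) ∂μ := by
          refine integral_sub ?_ (integrable_const M)
          exact (integrable_cm μ g).const_mul c
      _ = c * (∫ x, g x ∂μ) - M * (μ univ).toReal := by
          rw [integral_const_mul, integral_const, smul_eq_mul, measureReal_def]; ring
  have h3 := lam_le_integral Λ hΛ hg0 hg1
  have h4 := lam_one_eq Λ hΛ
  rw [h1, h2]
  have h5 : c * Λ g ≤ c * ∫ x, g x ∂μ := mul_le_mul_of_nonneg_left h3 hc0.le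
  rw [h4]
  linarith

lemma lam_eq_integral (f : C(X, ℝ)) : Λ f = ∫ x, f x ∂(μR Λ hΛ) := by
  haveI := μR_finite Λ hΛ
  refine le_antisymm (lam_le_integral' Λ hΛ f) ?_
  have h1 := lam_le_integral' Λ hΛ (-f)
  rw [map_neg] at h1
  have h2 : ∫ x, (-f) x ∂(μR Λ hΛ) = -∫ x, f x ∂(μR Λ hΛ) := by
    simp only [ContinuousMap.neg_apply]
    exact integral_neg _
  rw [h2] at h1
  linarith

omit hΛ in
/-- Two finite measures whose integrals of continuous functions agree assign the same
measure to compact sets (one direction). -/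
lemma measure_compact_le_of_integral_eq {ν μ' : Measure X} [IsFiniteMeasure ν]
    [IsFiniteMeasure μ'] [μ'.OuterRegular]
    (hsame : ∀ f : C(X, ℝ), ∫ x, f x ∂ν = ∫ x, f x ∂μ')
    {K : Set X} (hK : IsCompact K) : ν K ≤ μ' K := by
  rw [Set.measure_eq_iInf_isOpen K μ']
  refine le_iInf (fun U => le_iInf (fun hKU => le_iInf (fun hU => ?_)))
  have hdisj : Disjoint Uᶜ K := by
    rw [Set.disjoint_left]
    intro x hx hxK
    exact hx (hKU hxK)
  obtain ⟨f, hf0, hf1, hf01⟩ :=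
    exists_continuous_zero_one_of_isClosed (isClosed_compl_iff.2 hU) hK.isClosed hdisj
  have hKmeas : MeasurableSet K := hK.isClosed.measurableSet
  have hUmeas : MeasurableSet U := hU.measurableSet
  have h1 : (ν K).toReal ≤ ∫ x, f x ∂ν := by
    have hind : ∀ x, K.indicator (fun _ => (1 : ℝ)) x ≤ f x := by
      intro x
      by_cases hx : x ∈ K
      · rw [indicator_of_mem hx]
        exact le_of_eq (hf1 hx).symm
      · rw [indicator_of_notMem hx]
        exact (hf01 x).1
    calc (ν K).toReal = ∫ x, K.indicator (fun _ => (1 : ℝ)) x ∂ν := by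
          rw [integral_indicator_const (1 : ℝ) hKmeas, smul_eq_mul, mul_one, measureReal_def]
      _ ≤ ∫ x, f x ∂ν := by
          refine integral_mono ((integrable_const (1 : ℝ)).indicator hKmeas)
            (integrable_cm ν f) hind
  have h2 : ∫ x, f x ∂μ' ≤ (μ' U).toReal := by
    have hind : ∀ x, f x ≤ U.indicator (fun _ => (1 : ℝ)) x := by
      intro x
      by_cases hx : x ∈ U
      · rw [indicator_of_mem hx]
        exact (hf01 x).2
      · rw [indicator_of_notMem hx]
        exact le_of_eq (hf0 hx)
    calc ∫ x, f x ∂μ' ≤ ∫ x, U.indicator (fun _ => (1 : ℝ)) x ∂μ' := by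
          refine integral_mono (integrable_cm μ' f)
            ((integrable_const (1 : ℝ)).indicator hUmeas) hind
      _ = (μ' U).toReal := by
          rw [integral_indicator_const (1 : ℝ) hUmeas, smul_eq_mul, mul_one, measureReal_def]
  have h3 : (ν K).toReal ≤ (μ' U).toReal := by
    rw [hsame f] at h1
    linarith
  exact (ENNReal.toReal_le_toReal (measure_ne_top ν K) (measure_ne_top μ' U)).1 h3

omit hΛ in
lemma measure_eq_of_integral_eq {ν μ' : Measure X} (hν : ν.Regular) (hμ' : μ'.Regular)
    [IsFiniteMeasure ν] [IsFiniteMeasure μ']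
    (hsame : ∀ f : C(X, ℝ), ∫ x, f x ∂ν = ∫ x, f x ∂μ') : ν = μ' := by
  haveI := hν.toOuterRegular
  haveI := hμ'.toOuterRegular
  have hcompact : ∀ K : Set X, IsCompact K → ν K = μ' K := by
    intro K hK
    refine le_antisymm (measure_compact_le_of_integral_eq hsame hK)
      (measure_compact_le_of_integral_eq (fun f => (hsame f).symm) hK)
  have hopen : ∀ U : Set X, IsOpen U → ν U = μ' U := by
    intro U hU
    rw [hU.measure_eq_iSup_isCompact ν, hU.measure_eq_iSup_isCompact μ']
    exact iSup_congr (fun K => iSup_congr (fun _ => iSup_congr (fun hK => hcompact K hK)))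
  refine Measure.ext (fun s _hs => ?_)
  rw [Set.measure_eq_iInf_isOpen s ν, Set.measure_eq_iInf_isOpen s μ']
  exact iInf_congr (fun U => iInf_congr (fun _ => iInf_congr (fun hU => hopen U hU)))

end RMK11

/-- Riesz representation theorem (positive case): every positive linear functional
on `C(X, ℝ)`, for `X` compact Hausdorff, is integration against a unique regular
finite Borel measure. -/
theorem stmt_11 {X : Type*} [TopologicalSpace X] [CompactSpace X] [T2Space X]
    [MeasurableSpace X] [BorelSpace X]
    (Λ : C(X, ℝ) →ₗ[ℝ] ℝ)
    (hΛ : ∀ f : C(X, ℝ), (∀ x : X, 0 ≤ f x) → 0 ≤ Λ f) :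
    ∃! μ : Measure X, μ.Regular ∧ IsFiniteMeasure μ ∧
      ∀ f : C(X, ℝ), Λ f = ∫ x, f x ∂μ := by
  haveI := RMK11.μR_finite Λ hΛ
  refine ⟨RMK11.μR Λ hΛ, ⟨?_, inferInstance, fun f => RMK11.lam_eq_integral Λ hΛ f⟩, ?_⟩
  · exact MeasureTheory.Content.regular _
  · rintro ν ⟨hreg, hfin, hint⟩
    haveI := hfin
    refine RMK11.measure_eq_of_integral_eq hreg (MeasureTheory.Content.regular _) ?_
    intro f
    rw [← hint f, ← RMK11.lam_eq_integral Λ hΛ f]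
end

section
/- (Inversion of the characteristic function for integer-valued distributions) Let p : ℤ → ℝ satisfy p(b) ≥ 0 for all b and Σ'_{b ∈ ℤ} p(b) = 1 (a probability mass function on ℤ), and define the characteristic function φ : ℝ → ℂ by φ(t) = Σ'_{b ∈ ℤ} p(b)·exp(i·t·b). Then for every a ∈ ℤ, the averages (1/(2T))·∫_{-T}^{T} exp(-i·t·a)·φ(t) dt converge to p(a) as T → ∞. -/
open Filter Complex
open scoped Topology

/-- Inversion of the characteristic function of an integer-valued distribution:
if `p` is a probability mass function on `ℤ` with characteristic function
`φ t = ∑' b, p b * exp(i t b)`, then for every `a : ℤ` the averages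
`(1/(2T)) ∫_{-T}^{T} exp(-i t a) φ t dt` converge to `p a` as `T → ∞`. -/
theorem stmt_15 (p : ℤ → ℝ) (hp : ∀ b : ℤ, 0 ≤ p b) (hp1 : ∑' b : ℤ, p b = 1)
    (φ : ℝ → ℂ)
    (hφ : ∀ t : ℝ, φ t = ∑' b : ℤ, (p b : ℂ) * Complex.exp (Complex.I * t * b)) :
    ∀ a : ℤ,
      Tendsto
        (fun T : ℝ =>
          (1 / (2 * T) : ℂ) *
            ∫ t in (-T)..T, Complex.exp (-Complex.I * t * a) * φ t)
        atTop (𝓝 ((p a : ℂ))) := by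
  intro a
  have hsum : Summable p := by
    by_contra h
    rw [tsum_eq_zero_of_not_summable h] at hp1
    norm_num at hp1
  -- the exponent coefficients
  set c : ℤ → ℂ := fun b => Complex.I * ((b : ℂ) - (a : ℂ)) with hc
  have hcre : ∀ (b : ℤ) (t : ℝ), (c b * t).re = 0 := by
    intro b t
    simp [hc, Complex.mul_re, Complex.mul_im]
  have hnorm_exp : ∀ (b : ℤ) (t : ℝ), ‖Complex.exp (c b * t)‖ = 1 := by
    intro b t
    rw [Complex.norm_exp, hcre, Real.exp_zero]
  -- continuous maps
  set F : ℤ → C(ℝ, ℂ) := fun b =>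
    ⟨fun t => (p b : ℂ) * Complex.exp (c b * t), by fun_prop⟩ with hF
  -- pointwise identity
  have hpt : ∀ t : ℝ, Complex.exp (-Complex.I * t * a) * φ t = ∑' b : ℤ, F b t := by
    intro t
    rw [hφ t, ← tsum_mul_left]
    congr 1; funext b
    simp only [hF, ContinuousMap.coe_mk]
    rw [← mul_assoc, mul_comm (Complex.exp _) ((p b : ℂ)), mul_assoc, ← Complex.exp_add]
    simp only [hc]
    ring_nf
  -- summability of restricted norms
  have hFsum : ∀ (T : ℝ), Summable fun b : ℤ =>
      ‖(F b).restrict (⟨Set.uIcc (-T) T, isCompact_uIcc⟩ : TopologicalSpace.Compacts ℝ)‖ := by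
    intro T
    apply hsum.of_nonneg_of_le (fun b => norm_nonneg _)
    intro b
    apply ContinuousMap.norm_le _ (hp b) |>.mpr
    intro x
    simp only [ContinuousMap.restrict_apply, hF, ContinuousMap.coe_mk]
    rw [norm_mul, hnorm_exp, mul_one, Complex.norm_real]
    exact le_of_eq (Real.norm_of_nonneg (hp b))
  -- swap integral and sum
  have key : ∀ T : ℝ, (∫ t in (-T)..T, Complex.exp (-Complex.I * t * a) * φ t)
      = ∑' b : ℤ, (p b : ℂ) * ∫ t in (-T)..T, Complex.exp (c b * t) := by
    intro T
    rw [show (∫ t in (-T)..T, Complex.exp (-Complex.I * t * a) * φ t)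
        = ∫ t in (-T)..T, ∑' b : ℤ, F b t from
      intervalIntegral.integral_congr (fun t _ => hpt t)]
    rw [← intervalIntegral.tsum_intervalIntegral_eq_of_summable_norm (hFsum T)]
    congr 1; funext b
    rw [← intervalIntegral.integral_const_mul]
    rfl
  -- final form: f T b
  set f : ℝ → ℤ → ℂ := fun T b =>
    (1 / (2 * T) : ℂ) * ((p b : ℂ) * ∫ t in (-T)..T, Complex.exp (c b * t)) with hf
  have heq : (fun T : ℝ => (1 / (2 * T) : ℂ) *
      ∫ t in (-T)..T, Complex.exp (-Complex.I * t * a) * φ t)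
      = fun T => ∑' b : ℤ, f T b := by
    funext T
    rw [key T, ← tsum_mul_left]
  rw [heq]
  have htsum_g : (p a : ℂ) = ∑' b : ℤ, (if b = a then (p a : ℂ) else 0) := by
    rw [tsum_eq_single a]
    · simp
    · intro b hb; simp [hb]
  rw [htsum_g]
  apply tendsto_tsum_of_dominated_convergence hsum
  · -- pointwise limits
    intro b
    by_cases hb : b = a
    · subst hb
      have : ∀ᶠ T : ℝ in atTop, f T b = (p b : ℂ) := by
        filter_upwards [eventually_gt_atTop (0:ℝ)] with T hT
        have : c b = 0 := by simp [hc]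
        simp only [hf, this, zero_mul, Complex.exp_zero]
        rw [intervalIntegral.integral_const]
        have h2T : (2 * T : ℂ) ≠ 0 := by
          simp only [ne_eq, mul_eq_zero]
          push_neg
          exact ⟨by norm_num, by exact_mod_cast hT.ne'⟩
        have hTT : ((T - -T : ℝ) : ℂ) = 2 * T := by push_cast; ring
        rw [real_smul, mul_one, hTT, mul_comm (1 / (2 * (T:ℂ))), mul_assoc,
          mul_one_div, div_self h2T, mul_one]
      simp only [if_pos rfl]
      exact Tendsto.congr' (this.mono fun T h => h.symm) tendsto_const_nhds
    · simp only [if_neg hb]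
      rw [tendsto_zero_iff_norm_tendsto_zero]
      have hcb : c b ≠ 0 := by
        apply mul_ne_zero Complex.I_ne_zero
        rw [sub_ne_zero]
        exact_mod_cast hb
      have hbound : ∀ᶠ T : ℝ in atTop, ‖f T b‖ ≤ (p b * (2 / ‖c b‖)) * (1 / (2 * T)) := by
        filter_upwards [eventually_gt_atTop (0:ℝ)] with T hT
        have hint := integral_exp_mul_complex (a := -T) (b := T) hcb
        rw [hf]
        simp only [norm_mul]
        have h1 : ‖(1 / (2 * T) : ℂ)‖ = 1 / (2 * T) := by
          rw [norm_div, norm_one]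
          rw [show ((2 : ℂ) * T) = ((2 * T : ℝ) : ℂ) by push_cast; ring]
          rw [Complex.norm_real, Real.norm_of_nonneg (by linarith)]
        have h2 : ‖(∫ t in (-T)..T, Complex.exp (c b * t))‖ ≤ 2 / ‖c b‖ := by
          rw [hint, norm_div]
          gcongr
          calc ‖Complex.exp (c b * T) - Complex.exp (c b * ((-T : ℝ) : ℂ))‖
              ≤ ‖Complex.exp (c b * T)‖ + ‖Complex.exp (c b * ((-T : ℝ) : ℂ))‖ :=
                norm_sub_le _ _
            _ = 2 := by rw [hnorm_exp b T, hnorm_exp b (-T)]; norm_num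
        have hpn : ‖((p b : ℝ) : ℂ)‖ = p b := by
          rw [Complex.norm_real, Real.norm_of_nonneg (hp b)]
        calc ‖(1 / (2 * T) : ℂ)‖ * (‖((p b : ℝ) : ℂ)‖ * ‖∫ t in (-T)..T, Complex.exp (c b * t)‖)
            ≤ (1 / (2 * T)) * (p b * (2 / ‖c b‖)) := by
              rw [h1, hpn]
              apply mul_le_mul_of_nonneg_left ?_ (by positivity)
              exact mul_le_mul_of_nonneg_left h2 (hp b)
          _ = (p b * (2 / ‖c b‖)) * (1 / (2 * T)) := by ring
      have hlim : Tendsto (fun T : ℝ => (p b * (2 / ‖c b‖)) * (1 / (2 * T))) atTop (𝓝 0) := by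
        rw [show (0:ℝ) = (p b * (2 / ‖c b‖)) * 0 by ring]
        apply Tendsto.const_mul
        simpa using (tendsto_const_nhds.div_atTop (tendsto_id.const_mul_atTop (by norm_num : (0:ℝ) < 2)) : Tendsto (fun T : ℝ => 1 / (2 * T)) atTop (𝓝 0))
      exact squeeze_zero' (by filter_upwards with T using norm_nonneg _) hbound hlim
  · -- uniform bound
    filter_upwards [eventually_gt_atTop (0:ℝ)] with T hT
    intro b
    rw [hf]
    simp only [norm_mul]
    have h1 : ‖(1 / (2 * T) : ℂ)‖ = 1 / (2 * T) := by
      rw [norm_div, norm_one]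
      rw [show ((2 : ℂ) * T) = ((2 * T : ℝ) : ℂ) by push_cast; ring]
      rw [Complex.norm_real, Real.norm_of_nonneg (by linarith)]
    have h2 : ‖(∫ t in (-T)..T, Complex.exp (c b * t))‖ ≤ 1 * |T - (-T)| := by
      apply intervalIntegral.norm_integral_le_of_norm_le_const
      intro t _
      rw [hnorm_exp]
    have hpn : ‖((p b : ℝ) : ℂ)‖ = p b := by
      rw [Complex.norm_real, Real.norm_of_nonneg (hp b)]
    calc ‖(1 / (2 * T) : ℂ)‖ * (‖((p b : ℝ) : ℂ)‖ * ‖∫ t in (-T)..T, Complex.exp (c b * t)‖)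
        ≤ (1 / (2 * T)) * (p b * (2 * T)) := by
          rw [h1, hpn]
          apply mul_le_mul_of_nonneg_left ?_ (by positivity)
          apply mul_le_mul_of_nonneg_left ?_ (hp b)
          calc ‖∫ t in (-T)..T, Complex.exp (c b * t)‖ ≤ 1 * |T - (-T)| := h2
            _ = 2 * T := by rw [one_mul, abs_of_pos (by linarith)]; ring
      _ = p b := by field_simp
end
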